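/- arXiv:2109.12409 — 2 statements merged into one kernel-verified Lean document; each statement's English description precedes it below -/
import Mathlib

section
/- Let τ ≥ 1, G ≥ 1, C > 0, ρ ≥ 0, n ≥ 0, n' ≥ 0 and n'' ≤ 0 be real numbers, and suppose τ·G·C·ρ·n ≥ 2. Then (2·C/τ²)·(2·n' + ρ·n'') ≤ G²·C²·(ρ·n' + n)²; equivalently, the determinant expression det(H) = (2·C/τ²)·(2·n' + ρ·n'') − G²·C²·(ρ·n' + n)² of the Hessian H = [[−2/(τ³·G), −G·C·(ρ·n' + n)], [−G·C·(ρ·n' + n), −G·C·τ·(2·n' + ρ·n'')]] of the orchestrator's utility is nonpositive. -/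
/-- If the participation revenue satisfies `τ·G·C·ρ·n ≥ 2`, then the determinant expression
of the Hessian of the orchestrator's utility is nonpositive:
`(2·C/τ²)·(2·n' + ρ·n'') ≤ G²·C²·(ρ·n' + n)²`. -/
theorem hessian_det_nonpos (τ G C ρ n n' n'' : ℝ)
    (hτ : 1 ≤ τ) (hG : 1 ≤ G) (hC : 0 < C) (hρ : 0 ≤ ρ) (hn : 0 ≤ n)
    (hn' : 0 ≤ n') (hn'' : n'' ≤ 0) (hrev : τ * G * C * ρ * n ≥ 2) :
    (2 * C / τ ^ 2) * (2 * n' + ρ * n'') ≤ G ^ 2 * C ^ 2 * (ρ * n' + n) ^ 2 := by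
  have hτ0 : (0:ℝ) < τ := by linarith
  have hτ2 : (0:ℝ) < τ ^ 2 := by positivity
  rw [div_mul_eq_mul_div, div_le_iff₀ hτ2]
  -- 2C(2n' + ρn'') ≤ G²C²(ρn'+n)² τ²
  have h1 : 2 * C * (2 * n' + ρ * n'') ≤ 4 * C * n' := by nlinarith [mul_nonneg hρ (neg_nonneg.mpr hn'')]
  have h2 : 4 * C * n' * 1 ≤ 2 * (τ * G * C * ρ * n) * (G * C * n') := by
    nlinarith [mul_nonneg (mul_nonneg hC.le hn') (by linarith : (0:ℝ) ≤ G - 1),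
      mul_nonneg (mul_nonneg hC.le hn') (by linarith : (0:ℝ) ≤ τ * G * C * ρ * n - 2)]
  have hA : (0:ℝ) ≤ G ^ 2 * C ^ 2 * ((τ ^ 2 - τ) * (ρ * n' * n)) := by
    have : (0:ℝ) ≤ τ ^ 2 - τ := by nlinarith
    positivity
  have hB : (0:ℝ) ≤ G ^ 2 * C ^ 2 * (τ ^ 2 * ((ρ * n') ^ 2 + n ^ 2)) := by positivity
  have h3 : 2 * (τ * G * C * ρ * n) * (G * C * n') * 1 ≤ G ^ 2 * C ^ 2 * (ρ * n' + n) ^ 2 * τ ^ 2 := by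
    nlinarith [hA, hB]
  nlinarith [h1, h2, h3]
end

section
/- Let a > 0, b > 0, B > 0, α > 0, and c, β, ρ be real numbers; let G ≥ 1, τ ≥ 1, C > 0 with 1 − G·c ≥ 0, α·ρ − β ≥ 0 and ρ ≥ 0. Define A = α·ρ − β, n = A·(1 − G·c)/(G·(a·B + b·A)), n' = B·a·α·(1 − G·c)/(G·(a·B + b·A)²), and n'' = −2·a·α²·b·B·(1 − G·c)/(G·(a·B + b·A)³). If τ·G·C·ρ·n ≥ 2, then the 2×2 matrix H = [[−2/(τ³·G), −G·C·(ρ·n' + n)], [−G·C·(ρ·n' + n), −G·C·τ·(2·n' + ρ·n'')]] satisfies H 0 0 < 0 and det H ≤ 0. -/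
set_option maxHeartbeats 1000000 in
/-- Theorem 2 of the paper: under the participation-revenue condition `τ·G·C·ρ·n ≥ 2`,
the Hessian `H` of the orchestrator's utility has negative leading entry and nonpositive
determinant (hence is negative semi-definite). -/
theorem orchestrator_hessian_nsd (a b c B α β G τ C ρ : ℝ)
    (ha : 0 < a) (hb : 0 < b) (hB : 0 < B) (hα : 0 < α)
    (hG : 1 ≤ G) (hτ : 1 ≤ τ) (hC : 0 < C)
    (hc : 0 ≤ 1 - G * c) (hA : 0 ≤ α * ρ - β) (hρ : 0 ≤ ρ)
    (hrev : τ * G * C * ρ *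
      ((α * ρ - β) * (1 - G * c) / (G * (a * B + b * (α * ρ - β)))) ≥ 2) :
    (!![-2 / (τ ^ 3 * G),
        -G * C * (ρ * (B * a * α * (1 - G * c) / (G * (a * B + b * (α * ρ - β)) ^ 2)) +
          (α * ρ - β) * (1 - G * c) / (G * (a * B + b * (α * ρ - β))));
        -G * C * (ρ * (B * a * α * (1 - G * c) / (G * (a * B + b * (α * ρ - β)) ^ 2)) +
          (α * ρ - β) * (1 - G * c) / (G * (a * B + b * (α * ρ - β)))),
        -G * C * τ * (2 * (B * a * α * (1 - G * c) / (G * (a * B + b * (α * ρ - β)) ^ 2)) +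
          ρ * (-2 * a * α ^ 2 * b * B * (1 - G * c) /
            (G * (a * B + b * (α * ρ - β)) ^ 3)))] : Matrix (Fin 2) (Fin 2) ℝ) 0 0 < 0 ∧
    (!![-2 / (τ ^ 3 * G),
        -G * C * (ρ * (B * a * α * (1 - G * c) / (G * (a * B + b * (α * ρ - β)) ^ 2)) +
          (α * ρ - β) * (1 - G * c) / (G * (a * B + b * (α * ρ - β))));
        -G * C * (ρ * (B * a * α * (1 - G * c) / (G * (a * B + b * (α * ρ - β)) ^ 2)) +
          (α * ρ - β) * (1 - G * c) / (G * (a * B + b * (α * ρ - β)))),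
        -G * C * τ * (2 * (B * a * α * (1 - G * c) / (G * (a * B + b * (α * ρ - β)) ^ 2)) +
          ρ * (-2 * a * α ^ 2 * b * B * (1 - G * c) /
            (G * (a * B + b * (α * ρ - β)) ^ 3)))] : Matrix (Fin 2) (Fin 2) ℝ).det ≤ 0 := by
  have hG0 : (0:ℝ) < G := lt_of_lt_of_le one_pos hG
  have hτ0 : (0:ℝ) < τ := lt_of_lt_of_le one_pos hτ
  set A : ℝ := α * ρ - β with hAdef
  set k : ℝ := 1 - G * c with hkdef
  set D : ℝ := a * B + b * A with hDdef
  clear_value A k D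
  have hD : 0 < D := hDdef ▸ add_pos_of_pos_of_nonneg (mul_pos ha hB) (mul_nonneg hb.le hA)
  have h1 : τ * G * C * ρ * (A * k / (G * D)) = (τ * C * ρ * (A * k)) / D := by
    field_simp
  rw [ge_iff_le, h1, le_div_iff₀ hD] at hrev
  -- hrev : 2 * D ≤ τ * C * ρ * (A * k)
  have hprod : 0 < ρ * (A * k) := by nlinarith [mul_pos hτ0 hC]
  have hρ0 : 0 < ρ := by
    rcases hρ.lt_or_eq with h | h
    · exact h
    · exfalso; rw [← h] at hprod; simp at hprod
  have hAk : 0 < A * k := by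
    by_contra h; push_neg at h
    nlinarith [mul_nonpos_of_nonneg_of_nonpos hρ h]
  have hA0 : 0 < A := by
    rcases hA.lt_or_eq with h | h
    · exact h
    · exfalso; rw [← h] at hAk; simp at hAk
  have hk0 : 0 < k := by
    rcases hc.lt_or_eq with h | h
    · exact h
    · exfalso; rw [← h] at hAk; simp at hAk
  constructor
  · simp only [Matrix.cons_val', Matrix.cons_val_zero, Matrix.empty_val',
      Matrix.cons_val_fin_one, Matrix.of_apply]
    apply div_neg_of_neg_of_pos (by norm_num)
    positivity
  · rw [Matrix.det_fin_two_of]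
    have e1 : -2 / (τ ^ 3 * G) *
        (-G * C * τ * (2 * (B * a * α * k / (G * D ^ 2)) +
          ρ * (-2 * a * α ^ 2 * b * B * k / (G * D ^ 3)))) =
        4 * C * a * B * α * k * (D - b * α * ρ) / (τ ^ 2 * G * D ^ 3) := by
      field_simp; ring
    have e2 : -G * C * (ρ * (B * a * α * k / (G * D ^ 2)) + A * k / (G * D)) *
        (-G * C * (ρ * (B * a * α * k / (G * D ^ 2)) + A * k / (G * D))) =
        C ^ 2 * k ^ 2 * (ρ * a * B * α + A * D) ^ 2 / D ^ 4 := by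
      field_simp
    rw [e1, e2, sub_nonpos, div_le_div_iff₀ (by positivity) (by positivity)]
    have core : 4 * a * B * α * k * (D - b * α * ρ) * D ≤
        τ ^ 2 * G * C * k ^ 2 * (ρ * a * B * α + A * D) ^ 2 := by
      have s1 : 4 * (ρ * a * B * α) * (A * D) ≤ (ρ * a * B * α + A * D) ^ 2 := by
        nlinarith [sq_nonneg (ρ * a * B * α - A * D)]
      have hbar : D - b * α * ρ ≤ D := by nlinarith [mul_nonneg (mul_nonneg hb.le hα.le) hρ]
      have hx : (0:ℝ) ≤ 4 * a * B * α * k * D := by positivity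
      have s2 : 4 * a * B * α * k * (D - b * α * ρ) * D ≤ 4 * a * B * α * k * D * D := by
        nlinarith [mul_le_mul_of_nonneg_left hbar hx]
      have hy : (0:ℝ) ≤ 2 * a * B * α * k * D := by positivity
      have s3 : 4 * a * B * α * k * D * D ≤
          2 * a * B * α * k * D * (τ * C * ρ * (A * k)) := by
        nlinarith [mul_le_mul_of_nonneg_left hrev hy]
      have s4 : 2 * a * B * α * k * D * (τ * C * ρ * (A * k)) ≤
          τ ^ 2 * G * C * k ^ 2 * (4 * (ρ * a * B * α) * (A * D)) := by
        have hz : (0:ℝ) ≤ τ * C * k ^ 2 * (ρ * a * B * α) * (A * D) := by positivity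
        nlinarith [mul_le_mul_of_nonneg_right (show (2:ℝ) ≤ 4 * τ * G by nlinarith) hz]
      have s5 : τ ^ 2 * G * C * k ^ 2 * (4 * (ρ * a * B * α) * (A * D)) ≤
          τ ^ 2 * G * C * k ^ 2 * (ρ * a * B * α + A * D) ^ 2 := by
        have hw : (0:ℝ) ≤ τ ^ 2 * G * C * k ^ 2 := by positivity
        exact mul_le_mul_of_nonneg_left s1 hw
      linarith
    have hCD : (0:ℝ) ≤ C * D ^ 3 := by positivity
    nlinarith [mul_le_mul_of_nonneg_left core hCD]
end
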